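/- arXiv:2209.07517 — 3 statements merged into one kernel-verified Lean document; each statement's English description precedes it below -/
import Mathlib

section
/- Let (M, 𝒜, μ) be a finite measure space, X = L²(μ) the real Hilbert space with inner product ⟪f,g⟫ = ∫ f·g dμ, and J : X → ℝ absolutely one-homogeneous and translation invariant. Suppose C ⊆ M is measurable with μ(C) > 0 and μ(M \ C) > 0, and C is an eigenset of J with eigenvalue λ and ratio β = μ(C)/μ(M \ C). Then for every measurable set D with C ⊆ D ⊆ M and μ(M \ D) > 0, one has J(χ_C) ≤ (μ(M \ C)/μ(M \ D)) · J(χ_D). (This is the paper's main Theorem: every eigenset of a closed surface's total variation is a locally minimal perimeter set.) -/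
open MeasureTheory RealInnerProductSpace

/-- `p` is a subgradient of `J` at `u`. -/
def IsSubgradientAt {X : Type*} [NormedAddCommGroup X] [InnerProductSpace ℝ X]
    (J : X → ℝ) (p u : X) : Prop :=
  ∀ v : X, J v ≥ J u + ⟪p, v - u⟫

/-- The indicator function of a measurable set as an element of `L²(μ)`. -/
noncomputable def chi {M : Type*} [MeasurableSpace M] (μ : Measure M) [IsFiniteMeasure μ]
    {C : Set M} (hC : MeasurableSet C) : Lp ℝ 2 μ :=
  indicatorConstLp 2 hC (measure_ne_top μ C) (1 : ℝ)

/-- `C` is an eigenset of `J` with eigenvalue `lam` and ratio `β > 0`: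
`ψ := χ_C − β • χ_{M \ C}` satisfies that `lam • ψ` is a subgradient of `J` at `ψ`. -/
def IsEigenset {M : Type*} [MeasurableSpace M] (μ : Measure M) [IsFiniteMeasure μ]
    (J : Lp ℝ 2 μ → ℝ) {C : Set M} (hC : MeasurableSet C) (lam β : ℝ) : Prop :=
  0 < β ∧ IsSubgradientAt J
    (lam • (chi μ hC - β • chi μ hC.compl)) (chi μ hC - β • chi μ hC.compl)

/-!
If `J` is positively homogeneous and `p ∈ ∂J(u)`, then `J u = ⟪p, u⟫` and `⟪p, ·⟫ ≤ J`;
if `J` is moreover invariant under translation by `1`, then `⟪p, 1⟫ = 0`. For the eigenset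
`C` the subgradient `p = λψ` is therefore orthogonal to constants, so
`⟪p, χ_D⟫ = -⟪p, χ_{Dᶜ}⟫ = λβ μ(Dᶜ)` for every `D ⊇ C`. Since `ψ = (1 + β) χ_C - β • 1`,
homogeneity and translation invariance turn `J ψ = ⟪p, ψ⟫` into `J χ_C = ⟪p, χ_C⟫ = λβ μ(Cᶜ)`,
while `J χ_D ≥ ⟪p, χ_D⟫ = λβ μ(Dᶜ)`.
-/

namespace IsSubgradientAt

variable {X : Type*} [NormedAddCommGroup X] [InnerProductSpace ℝ X] {J : X → ℝ} {p u : X}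

theorem apply_eq_inner (hhom : ∀ t : ℝ, 0 ≤ t → ∀ v, J (t • v) = t * J v)
    (hp : IsSubgradientAt J p u) : J u = ⟪p, u⟫ := by
  have h₀ := hp 0
  have h₂ := hp ((2 : ℝ) • u)
  rw [← zero_smul ℝ u, hhom 0 le_rfl, zero_smul, zero_sub, inner_neg_right] at h₀
  rw [hhom 2 zero_le_two, two_smul, add_sub_cancel_right] at h₂
  linarith

theorem inner_le (hhom : ∀ t : ℝ, 0 ≤ t → ∀ v, J (t • v) = t * J v)
    (hp : IsSubgradientAt J p u) (v : X) : ⟪p, v⟫ ≤ J v := by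
  have h := hp v
  rw [inner_sub_right, hp.apply_eq_inner hhom] at h
  linarith

theorem inner_eq_zero_of_translation_invariant {e : X} (htrans : ∀ v (c : ℝ), J (v + c • e) = J v)
    (hp : IsSubgradientAt J p u) : ⟪p, e⟫ = 0 := by
  have hpos := hp (u + (1 : ℝ) • e)
  have hneg := hp (u + (-1 : ℝ) • e)
  rw [htrans, add_sub_cancel_left, real_inner_smul_right] at hpos hneg
  linarith

theorem apply_eq_inner_of_eq_smul_add {e w : X} {t c : ℝ}
    (hhom : ∀ t : ℝ, 0 ≤ t → ∀ v, J (t • v) = t * J v)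
    (htrans : ∀ v (c : ℝ), J (v + c • e) = J v)
    (hp : IsSubgradientAt J p u) (hu : u = t • w + c • e) (ht : 0 < t) :
    J w = ⟪p, w⟫ := by
  have h := hp.apply_eq_inner hhom
  rw [hu, htrans, hhom t ht.le, inner_add_right, real_inner_smul_right, real_inner_smul_right,
    hp.inner_eq_zero_of_translation_invariant htrans, mul_zero, add_zero] at h
  exact mul_left_cancel₀ ht.ne' h

end IsSubgradientAt

section Indicator

variable {M : Type*} [MeasurableSpace M] (μ : Measure M) [IsFiniteMeasure μ]

theorem inner_chi_chi {A B : Set M} (hA : MeasurableSet A) (hB : MeasurableSet B) :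
    ⟪chi μ hA, chi μ hB⟫ = μ.real (A ∩ B) :=
  L2.inner_indicatorConstLp_one_indicatorConstLp_one hA hB

theorem chi_add_chi_compl {C : Set M} (hC : MeasurableSet C) :
    chi μ hC + chi μ hC.compl = chi μ MeasurableSet.univ := by
  rw [chi, chi, ← indicatorConstLp_disjoint_union hC hC.compl (measure_ne_top μ C)
    (measure_ne_top μ Cᶜ) disjoint_compl_right (1 : ℝ)]
  simp only [chi, Set.union_compl_self]

theorem inner_chi_sub_smul_chi_compl_of_disjoint {C E : Set M} (hC : MeasurableSet C)
    (hE : MeasurableSet E) (hCE : Disjoint C E) (β : ℝ) :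
    ⟪chi μ hC - β • chi μ hC.compl, chi μ hE⟫ = -(β * μ.real E) := by
  rw [inner_sub_left, real_inner_smul_left, inner_chi_chi, inner_chi_chi,
    hCE.inter_eq, Set.inter_eq_right.mpr hCE.subset_compl_left]
  simp

end Indicator

theorem eigenset_is_locally_minimal_perimeter_set_general
    {M : Type*} [MeasurableSpace M] (μ : Measure M) [IsFiniteMeasure μ]
    (J : Lp ℝ 2 μ → ℝ)
    (hhom : ∀ (α : ℝ) (u : Lp ℝ 2 μ), J (α • u) = |α| * J u)
    (htrans : ∀ (u : Lp ℝ 2 μ) (c : ℝ),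
      J (u + c • chi μ (MeasurableSet.univ : MeasurableSet (Set.univ : Set M))) = J u)
    {C : Set M} (hC : MeasurableSet C)
    (lam : ℝ)
    (heig : IsEigenset μ J hC lam ((μ C).toReal / (μ Cᶜ).toReal)) :
    ∀ (D : Set M) (hD : MeasurableSet D), C ⊆ D → 0 < μ Dᶜ →
      J (chi μ hC) ≤ ((μ Cᶜ).toReal / (μ Dᶜ).toReal) * J (chi μ hD) := by
  intro D hD hCD hDc
  obtain ⟨hβ, hp⟩ := heig
  set β := (μ C).toReal / (μ Cᶜ).toReal
  have hhom' : ∀ t : ℝ, 0 ≤ t → ∀ v, J (t • v) = t * J v := fun t ht v => by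
    rw [hhom, abs_of_nonneg ht]
  have hinner : ∀ {E : Set M} (hE : MeasurableSet E), C ⊆ E →
      ⟪lam • (chi μ hC - β • chi μ hC.compl), chi μ hE⟫ = lam * β * μ.real Eᶜ := by
    intro E hE hCE
    rw [eq_sub_of_add_eq (chi_add_chi_compl μ hE), inner_sub_right,
      hp.inner_eq_zero_of_translation_invariant htrans, real_inner_smul_left,
      inner_chi_sub_smul_chi_compl_of_disjoint μ hC hE.compl
        (Set.disjoint_compl_right_iff_subset.mpr hCE)]
    ring
  have hψ : chi μ hC - β • chi μ hC.compl = (1 + β) • chi μ hC + (-β) • chi μ .univ := by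
    rw [eq_sub_of_add_eq' (chi_add_chi_compl μ hC)]
    module
  have hJC : J (chi μ hC) = lam * β * μ.real Cᶜ := by
    rw [hp.apply_eq_inner_of_eq_smul_add hhom' htrans hψ (by positivity), hinner hC le_rfl]
  have hJD : lam * β * μ.real Dᶜ ≤ J (chi μ hD) := hinner hD hCD ▸ hp.inner_le hhom' _
  have hd : 0 < μ.real Dᶜ := ENNReal.toReal_pos hDc.ne' (measure_ne_top μ Dᶜ)
  calc J (chi μ hC) = μ.real Cᶜ / μ.real Dᶜ * (lam * β * μ.real Dᶜ) := by
        rw [hJC]; field_simp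
    _ ≤ μ.real Cᶜ / μ.real Dᶜ * J (chi μ hD) := by gcongr

/-- Every eigenset of a translation-invariant, absolutely one-homogeneous functional on
a finite measure space is a locally minimal perimeter set:
`J(χ_C) ≤ (μ(M \ C)/μ(M \ D)) · J(χ_D)` for every measurable `D ⊇ C`. -/
theorem eigenset_is_locally_minimal_perimeter_set
    {M : Type*} [MeasurableSpace M] (μ : Measure M) [IsFiniteMeasure μ]
    (J : Lp ℝ 2 μ → ℝ)
    (hhom : ∀ (α : ℝ) (u : Lp ℝ 2 μ), J (α • u) = |α| * J u)
    (htrans : ∀ (u : Lp ℝ 2 μ) (c : ℝ),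
      J (u + c • chi μ (MeasurableSet.univ : MeasurableSet (Set.univ : Set M))) = J u)
    {C : Set M} (hC : MeasurableSet C) (hCpos : 0 < μ C) (hCcpos : 0 < μ Cᶜ)
    (lam : ℝ)
    (heig : IsEigenset μ J hC lam ((μ C).toReal / (μ Cᶜ).toReal)) :
    ∀ (D : Set M) (hD : MeasurableSet D), C ⊆ D → 0 < μ Dᶜ →
      J (chi μ hC) ≤ ((μ Cᶜ).toReal / (μ Dᶜ).toReal) * J (chi μ hD) :=
  eigenset_is_locally_minimal_perimeter_set_general μ J hhom htrans hC lam heig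
end

section
/- Let (M, 𝒜, μ) be a finite measure space, X = L²(μ) the real Hilbert space with inner product ⟪f,g⟫ = ∫ f·g dμ, and J : X → ℝ translation invariant. Suppose C ⊆ M is measurable with μ(M \ C) > 0, λ ≠ 0, and C is an eigenset of J with eigenvalue λ and ratio β > 0. Then β = μ(C)/μ(M \ C). (Claim: the ratio of an eigenset's indicator eigenfunction equals the ratio of the areas of the set and its complement.) -/
/-! Translation invariance makes `J` constant along the line `ψ + ℝ • 1`, so the subgradient
inequality at `ψ` forces every subgradient there to be orthogonal to `1`. For `λ • ψ` with
`λ ≠ 0` this orthogonality reads `μ(C) - β μ(Cᶜ) = 0`. -/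

open MeasureTheory RealInnerProductSpace

theorem IsSubgradientAt.inner_eq_zero_of_forall_add_smul {X : Type*} [NormedAddCommGroup X]
    [InnerProductSpace ℝ X] {J : X → ℝ} {p u e : X} (hp : IsSubgradientAt J p u)
    (hJ : ∀ c : ℝ, J (u + c • e) = J u) : ⟪p, e⟫ = 0 := by
  have hle : ∀ c : ℝ, c * ⟪p, e⟫ ≤ 0 := fun c => by
    have h := hp (u + c • e)
    rwa [hJ, add_sub_cancel_left, inner_smul_right, ge_iff_le, add_le_iff_nonpos_right] at h
  linarith [hle 1, hle (-1)]

theorem inner_chi_chi_s1 {M : Type*} [MeasurableSpace M] (μ : Measure M) [IsFiniteMeasure μ]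
    {C D : Set M} (hC : MeasurableSet C) (hD : MeasurableSet D) :
    ⟪chi μ hC, chi μ hD⟫ = μ.real (C ∩ D) :=
  L2.real_inner_indicatorConstLp_one_indicatorConstLp_one hC hD

/-- The ratio of an eigenset's indicator eigenfunction equals the ratio of the areas of
the set and its complement: `β = μ(C)/μ(M \ C)`. -/
theorem eigenset_ratio_eq_area_ratio
    {M : Type*} [MeasurableSpace M] (μ : Measure M) [IsFiniteMeasure μ]
    (J : Lp ℝ 2 μ → ℝ)
    (htrans : ∀ (u : Lp ℝ 2 μ) (c : ℝ),
      J (u + c • chi μ (MeasurableSet.univ : MeasurableSet (Set.univ : Set M))) = J u)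
    {C : Set M} (hC : MeasurableSet C) (hCcpos : 0 < μ Cᶜ)
    (lam β : ℝ) (hlam : lam ≠ 0)
    (heig : IsEigenset μ J hC lam β) :
    β = (μ C).toReal / (μ Cᶜ).toReal := by
  have horth := heig.2.inner_eq_zero_of_forall_add_smul (htrans _)
  rw [real_inner_smul_left, mul_eq_zero, or_iff_right hlam, inner_sub_left,
    real_inner_smul_left, inner_chi_chi_s1, inner_chi_chi_s1, Set.inter_univ, Set.inter_univ] at horth
  have hCc : 0 < μ.real Cᶜ := ENNReal.toReal_pos hCcpos.ne' (measure_ne_top μ _)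
  change β = μ.real C / μ.real Cᶜ
  rw [eq_div_iff hCc.ne']
  linarith
end

section
/- Let X be a real normed vector space and p : X → X a zero-homogeneous operator, i.e. p(α•f) = sign(α)•p(f) for all α ∈ ℝ and f ∈ X, with p(0) = 0. Let ψ ∈ X and λ > 0 satisfy p(ψ) = λ•ψ. Define u : [0, ∞) → X by u(t) = (1 − λt)•ψ for t ≤ 1/λ and u(t) = 0 for t > 1/λ. Then u(0) = ψ, and for every t ∈ [0, ∞) with t ≠ 1/λ the function u is differentiable at t with u'(t) = −p(u(t)). (Linear decay of eigenfunctions of a zero-homogeneous operator under the associated gradient-type flow, with extinction time 1/λ.) -/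
/-- Linear decay of an eigenfunction of a zero-homogeneous operator under the associated
gradient-type flow, with extinction time `1/λ`. -/
theorem eigenfunction_linear_decay
    {X : Type*} [NormedAddCommGroup X] [NormedSpace ℝ X]
    (p : X → X)
    (hp : ∀ (α : ℝ) (f : X), p (α • f) = Real.sign α • p f)
    (hp0 : p 0 = 0)
    (ψ : X) (lam : ℝ) (hlam : 0 < lam) (heig : p ψ = lam • ψ)
    (u : ℝ → X)
    (hu : ∀ t : ℝ, u t = if t ≤ 1 / lam then (1 - lam * t) • ψ else 0) :
    u 0 = ψ ∧ ∀ t : ℝ, 0 ≤ t → t ≠ 1 / lam → HasDerivAt u (-(p (u t))) t := by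
  have hpos : 0 < 1 / lam := by positivity
  constructor
  · rw [hu 0, if_pos (le_of_lt hpos)]
    simp
  · intro t ht hne
    rcases lt_or_gt_of_ne hne with hlt | hgt
    · -- t < 1/lam
      have hut : u t = (1 - lam * t) • ψ := by rw [hu t, if_pos hlt.le]
      have hsp : 0 < 1 - lam * t := by
        have : lam * t < lam * (1 / lam) := by
          exact mul_lt_mul_of_pos_left hlt hlam
        rw [mul_one_div_cancel hlam.ne'] at this
        linarith
      have hput : p (u t) = lam • ψ := by
        rw [hut, hp, Real.sign_of_pos hsp, one_smul, heig]
      have hd : HasDerivAt (fun s : ℝ => (1 - lam * s) • ψ) ((-lam) • ψ) t := by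
        have h1 : HasDerivAt (fun s : ℝ => 1 - lam * s) (-lam) t := by
          simpa using ((hasDerivAt_id t).const_mul lam).const_sub 1
        exact h1.smul_const ψ
      have heq : u =ᶠ[nhds t] fun s : ℝ => (1 - lam * s) • ψ := by
        filter_upwards [eventually_lt_nhds hlt] with s hs
        rw [hu s, if_pos hs.le]
      have := hd.congr_of_eventuallyEq heq
      rw [hput]
      simpa [neg_smul] using this
    · -- t > 1/lam
      have hut : u t = 0 := by rw [hu t, if_neg (not_le.mpr hgt)]
      have heq : u =ᶠ[nhds t] fun _ : ℝ => (0 : X) := by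
        filter_upwards [eventually_gt_nhds hgt] with s hs
        rw [hu s, if_neg (not_le.mpr hs)]
      have := (hasDerivAt_const t (0 : X)).congr_of_eventuallyEq heq
      rw [hut, hp0, neg_zero]
      exact this
end
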